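/- arXiv:2201.13091 — 4 statements merged into one kernel-verified Lean document; each statement's English description precedes it below -/
import Mathlib

section
/- Let $p_1,\dots,p_n$ be distinct complex numbers and $\sigma_1,\dots,\sigma_n$ real numbers satisfying $-\overline{v} + i\omega\overline{p_j} + \frac{1}{2\pi i}\sum_{k\neq j}\frac{\sigma_k}{p_j - p_k} = 0$ for all $j$. Then $\overline{v}\sum_j \sigma_j p_j - i\omega\sum_j \sigma_j |p_j|^2 = \frac{1}{4\pi i}\left[\left(\sum_k \sigma_k\right)^2 - \sum_k \sigma_k^2\right]$. -/
/-!
Multiply the `j`-th balance equation by `σ j * p j` and sum over `j`. In the resulting interaction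
term the contributions of `(j, k)` and `(k, j)` add up to `σ j * σ k`, because
`p j / (p j - p k) + p k / (p k - p j) = 1`.
-/

open Finset Complex

lemma div_sub_add_div_sub_eq_one {K : Type*} [Field K] {a b : K} (h : a ≠ b) :
    a / (a - b) + b / (b - a) = 1 := by
  rw [← neg_sub a b, div_neg, ← sub_eq_add_neg, ← sub_div, div_self (sub_ne_zero.mpr h)]

section SumErase

variable {ι : Type*} [Fintype ι] [DecidableEq ι]

lemma Finset.sum_sum_erase_comm {M : Type*} [AddCommMonoid M] (f : ι → ι → M) :
    ∑ j, ∑ k ∈ univ.erase j, f j k = ∑ j, ∑ k ∈ univ.erase j, f k j :=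
  sum_comm' fun j k => by simp only [mem_erase, mem_univ, and_true, true_and, ne_comm]

lemma Finset.sum_sum_erase_mul {R : Type*} [CommRing R] (σ : ι → R) :
    ∑ j, ∑ k ∈ univ.erase j, σ j * σ k = (∑ j, σ j) ^ 2 - ∑ j, σ j ^ 2 := by
  simp only [← mul_sum, sum_erase_eq_sub (mem_univ _), sum_sub_distrib, ← sum_mul, sq]

lemma two_mul_sum_mul_sum_erase_div_sub {K : Type*} [Field K] {p : ι → K}
    (hp : Function.Injective p) (σ : ι → K) :
    2 * ∑ j, σ j * p j * ∑ k ∈ univ.erase j, σ k / (p j - p k)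
      = (∑ j, σ j) ^ 2 - ∑ j, σ j ^ 2 := by
  have hterm : ∀ j k, σ j * p j * (σ k / (p j - p k)) = σ j * σ k * (p j / (p j - p k)) :=
    fun j k => by ring
  rw [two_mul]
  simp only [mul_sum, hterm]
  nth_rewrite 2 [sum_sum_erase_comm]
  rw [← sum_sum_erase_mul, ← sum_add_distrib]
  refine sum_congr rfl fun j _ => ?_
  rw [← sum_add_distrib]
  refine sum_congr rfl fun k hk => ?_
  have hjk : p j ≠ p k := hp.ne (mem_erase.mp hk).1.symm
  rw [mul_comm (σ k) (σ j), ← mul_add, div_sub_add_div_sub_eq_one hjk, mul_one]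

end SumErase

theorem second_moment_identity (n : ℕ) (p : Fin n → ℂ) (σ : Fin n → ℝ)
    (v : ℂ) (ω : ℝ) (hp : Function.Injective p)
    (hbal : ∀ j, -(starRingEnd ℂ) v + Complex.I * (ω : ℂ) * (starRingEnd ℂ) (p j)
      + (1 / (2 * (Real.pi : ℂ) * Complex.I)) *
        ∑ k ∈ Finset.univ.erase j, (σ k : ℂ) / (p j - p k) = 0) :
    (starRingEnd ℂ) v * (∑ j, (σ j : ℂ) * p j)
      - Complex.I * (ω : ℂ) * ∑ j, (σ j : ℂ) * ((‖p j‖ : ℝ) : ℂ)^2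
    = (1 / (4 * (Real.pi : ℂ) * Complex.I)) *
        ((∑ k, (σ k : ℂ))^2 - ∑ k, (σ k : ℂ)^2) := by
  set S : ℂ := ∑ j, (σ j : ℂ) * p j * ∑ k ∈ univ.erase j, (σ k : ℂ) / (p j - p k)
  have hπ : (Real.pi : ℂ) ≠ 0 := ofReal_ne_zero.mpr Real.pi_ne_zero
  calc (starRingEnd ℂ) v * (∑ j, (σ j : ℂ) * p j)
        - Complex.I * (ω : ℂ) * ∑ j, (σ j : ℂ) * ((‖p j‖ : ℝ) : ℂ)^2
      = 1 / (2 * (Real.pi : ℂ) * Complex.I) * S := by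
        rw [mul_sum, mul_sum, mul_sum, ← sum_sub_distrib]
        refine sum_congr rfl fun j _ => ?_
        rw [← conj_mul']
        linear_combination -(σ j : ℂ) * p j * hbal j
    _ = 1 / (4 * (Real.pi : ℂ) * Complex.I) * (2 * S) := by
        field_simp
        ring
    _ = _ := by rw [two_mul_sum_mul_sum_erase_div_sub hp]
end

section
/- Suppose $(p_k,\sigma_k)_{1\le k\le n}$ is a binary stationary vortex crystal: $\sigma_k = \pm 1$, the points are distinct, and $\sum_{k\neq j}\frac{\sigma_k}{p_j - p_k} = 0$ for all $j$. Let $m = \sum_k \sigma_k$. Then $m^2 = n$. -/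
open Finset Complex

theorem stationary_binary_m_sq_eq_n (n : ℕ) (p : Fin n → ℂ) (σ : Fin n → ℝ)
    (hp : Function.Injective p)
    (hbinary : ∀ k, σ k = 1 ∨ σ k = -1)
    (hbal : ∀ j, ∑ k ∈ Finset.univ.erase j, (σ k : ℂ) / (p j - p k) = 0) :
    (∑ k, σ k)^2 = (n : ℝ) := by
  have hne : ∀ j k : Fin n, k ≠ j → p j - p k ≠ 0 := by
    intro j k h hsub
    exact h (hp (sub_eq_zero.mp hsub).symm)
  have swap : ∀ g : Fin n → Fin n → ℂ,
      ∑ j, ∑ k ∈ Finset.univ.erase j, g j k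
        = ∑ j, ∑ k ∈ Finset.univ.erase j, g k j := by
    intro g
    refine Finset.sum_comm' ?_
    intro x y
    simp [Finset.mem_erase, eq_comm, and_comm]
  have h1 : ∀ j, ∑ k ∈ Finset.univ.erase j,
      (σ j : ℂ) * p j * ((σ k : ℂ) / (p j - p k)) = 0 := by
    intro j
    rw [← Finset.mul_sum, hbal j, mul_zero]
  have key : ∑ j, ∑ k ∈ Finset.univ.erase j, (σ j : ℂ) * σ k = 0 := by
    have split : ∀ j, ∀ k ∈ Finset.univ.erase j,
        (σ j : ℂ) * σ k
          = (σ j : ℂ) * p j * ((σ k : ℂ) / (p j - p k))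
            + (σ k : ℂ) * p k * ((σ j : ℂ) / (p k - p j)) := by
      intro j k hk
      have hk' : k ≠ j := (Finset.mem_erase.mp hk).1
      have h0 : p j - p k ≠ 0 := hne j k hk'
      have h0' : p k - p j ≠ 0 := by
        intro h; exact h0 (by rw [← neg_sub] at h; simpa using neg_eq_zero.mp h)
      field_simp
      ring
    calc ∑ j, ∑ k ∈ Finset.univ.erase j, (σ j : ℂ) * σ k
        = ∑ j, ∑ k ∈ Finset.univ.erase j,
            ((σ j : ℂ) * p j * ((σ k : ℂ) / (p j - p k))
              + (σ k : ℂ) * p k * ((σ j : ℂ) / (p k - p j))) := by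
          exact Finset.sum_congr rfl fun j _ => Finset.sum_congr rfl (split j)
      _ = (∑ j, ∑ k ∈ Finset.univ.erase j, (σ j : ℂ) * p j * ((σ k : ℂ) / (p j - p k)))
            + ∑ j, ∑ k ∈ Finset.univ.erase j, (σ k : ℂ) * p k * ((σ j : ℂ) / (p k - p j)) := by
          rw [← Finset.sum_add_distrib]
          exact Finset.sum_congr rfl fun j _ => Finset.sum_add_distrib
      _ = 0 + ∑ j, ∑ k ∈ Finset.univ.erase j, (σ j : ℂ) * p j * ((σ k : ℂ) / (p j - p k)) := by
          rw [Finset.sum_congr rfl fun j _ => h1 j, Finset.sum_const_zero,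
            swap (fun j k => (σ k : ℂ) * p k * ((σ j : ℂ) / (p k - p j)))]
          simp [h1]
      _ = 0 := by
          rw [Finset.sum_congr rfl fun j _ => h1 j, Finset.sum_const_zero, add_zero]
          
  have keyR : ∑ j, ∑ k ∈ Finset.univ.erase j, σ j * σ k = 0 := by
    have : ((∑ j, ∑ k ∈ Finset.univ.erase j, σ j * σ k : ℝ) : ℂ) = 0 := by
      push_cast
      exact key
    exact_mod_cast this
  have expand : (∑ k, σ k)^2
      = ∑ j, ((σ j * σ j) + ∑ k ∈ Finset.univ.erase j, σ j * σ k) := by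
    rw [sq, Finset.sum_mul_sum]
    refine Finset.sum_congr rfl fun j _ => ?_
    rw [add_comm, Finset.sum_erase_add _ _ (Finset.mem_univ j)]
  have hsq : ∀ j, σ j * σ j = 1 := by
    intro j
    rcases hbinary j with h | h <;> rw [h] <;> norm_num
  rw [expand, Finset.sum_add_distrib, keyR, add_zero]
  simp [hsq]
end

section
/- If $(p_k,\sigma_k)_{1\le k\le n}$ is a binary stationary vortex crystal with $n_+$ vortices of circulation $+1$ and $n_-$ vortices of circulation $-1$, then $\{n_+, n_-\} = \{\tfrac{j(j+1)}{2}, \tfrac{j(j-1)}{2}\}$ for some nonnegative integer $j$; i.e., $n_+$ and $n_-$ are successive triangular numbers. -/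
open Finset Complex Classical

theorem stationary_binary_triangular (n : ℕ) (p : Fin n → ℂ) (σ : Fin n → ℝ)
    (hp : Function.Injective p)
    (hbinary : ∀ k, σ k = 1 ∨ σ k = -1)
    (hbal : ∀ j, ∑ k ∈ Finset.univ.erase j, (σ k : ℂ) / (p j - p k) = 0) :
    ∃ j : ℕ,
      (2 * (Finset.univ.filter (fun k => σ k = 1)).card = j * (j + 1) ∧
       2 * (Finset.univ.filter (fun k => σ k = -1)).card = j * (j - 1)) ∨
      (2 * (Finset.univ.filter (fun k => σ k = -1)).card = j * (j + 1) ∧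
       2 * (Finset.univ.filter (fun k => σ k = 1)).card = j * (j - 1)) := by
  classical
  set A := (Finset.univ.filter (fun k => σ k = 1)).card with hA
  set B := (Finset.univ.filter (fun k => σ k = -1)).card with hB
  have hne : ∀ j k : Fin n, j ≠ k → p j - p k ≠ 0 := fun j k h =>
    sub_ne_zero.mpr (fun he => h (hp he))
  -- T = 0
  have hT : ∑ j, ∑ k ∈ Finset.univ.erase j, (σ j : ℂ) * σ k * (p j / (p j - p k)) = 0 := by
    apply Finset.sum_eq_zero
    intro j _
    have h0 := hbal j
    have : ∑ k ∈ Finset.univ.erase j, (σ j : ℂ) * σ k * (p j / (p j - p k))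
        = (σ j : ℂ) * p j * ∑ k ∈ Finset.univ.erase j, (σ k : ℂ) / (p j - p k) := by
      rw [Finset.mul_sum]
      exact Finset.sum_congr rfl fun k _ => by ring
    rw [this, h0, mul_zero]
  -- swapped version
  have hswap : ∑ j, ∑ k ∈ Finset.univ.erase j, (σ j : ℂ) * σ k * (p j / (p j - p k))
      = ∑ j, ∑ k ∈ Finset.univ.erase j, (σ k : ℂ) * σ j * (p k / (p k - p j)) := by
    exact Finset.sum_comm' (fun x y => by
      simp [Finset.mem_erase, eq_comm, and_comm, ne_comm])
  -- sum of products of sigmas vanishes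
  have hsig : ∑ j, ∑ k ∈ Finset.univ.erase j, (σ j : ℂ) * σ k = 0 := by
    have h2 : ∑ j, ∑ k ∈ Finset.univ.erase j, (σ j : ℂ) * σ k
        = (∑ j, ∑ k ∈ Finset.univ.erase j, (σ j : ℂ) * σ k * (p j / (p j - p k)))
        + ∑ j, ∑ k ∈ Finset.univ.erase j, (σ k : ℂ) * σ j * (p k / (p k - p j)) := by
      rw [← Finset.sum_add_distrib]
      apply Finset.sum_congr rfl
      intro j _
      rw [← Finset.sum_add_distrib]
      apply Finset.sum_congr rfl
      intro k hk
      have hd : p j - p k ≠ 0 := hne j k (fun h => (Finset.mem_erase.mp hk).1 h.symm)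
      have hd' : p k - p j ≠ 0 := hne k j (Finset.mem_erase.mp hk).1
      field_simp
      ring
    rw [h2, ← hswap, hT, add_zero]
  -- reduce to (∑ σ)^2 = n over ℂ
  have hsq : (∑ k, (σ k : ℂ)) ^ 2 = (n : ℂ) := by
    have h1 : ∀ j : Fin n, ∑ k ∈ Finset.univ.erase j, (σ j : ℂ) * σ k
        = (σ j : ℂ) * (∑ k, (σ k : ℂ)) - 1 := by
      intro j
      rw [← Finset.mul_sum, Finset.sum_erase_eq_sub (Finset.mem_univ j), mul_sub]
      have : (σ j : ℂ) * σ j = 1 := by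
        rcases hbinary j with h | h <;> rw [h] <;> norm_num
      rw [this]
    have := hsig
    rw [Finset.sum_congr rfl (fun j _ => h1 j), Finset.sum_sub_distrib,
      ← Finset.sum_mul, Finset.sum_const, Finset.card_univ, Fintype.card_fin,
      nsmul_eq_mul, mul_one] at this
    have h3 : (∑ k, (σ k : ℂ)) * (∑ k, (σ k : ℂ)) = (n : ℂ) := by linear_combination this
    rw [sq]; exact h3
  -- to reals
  have hsqR : (∑ k, σ k) ^ 2 = (n : ℝ) := by
    have : ((∑ k, σ k : ℝ) : ℂ) ^ 2 = ((n : ℝ) : ℂ) := by push_cast; push_cast at hsq; exact hsq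
    exact_mod_cast this
  -- ∑ σ = A - B
  have hAB : (∑ k, σ k) = (A : ℝ) - B := by
    rw [← Finset.sum_filter_add_sum_filter_not Finset.univ (fun k => σ k = 1)]
    have e1 : ∑ k ∈ Finset.univ.filter (fun k => σ k = 1), σ k = (A : ℝ) := by
      rw [Finset.sum_congr rfl (fun k hk => (Finset.mem_filter.mp hk).2),
        Finset.sum_const, nsmul_eq_mul, mul_one, hA]
    have hfilt : Finset.univ.filter (fun k => ¬ σ k = 1)
        = Finset.univ.filter (fun k => σ k = -1) := by
      apply Finset.filter_congr
      intro k _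
      rcases hbinary k with h | h <;> norm_num [h]
    have e2 : ∑ k ∈ Finset.univ.filter (fun k => ¬ σ k = 1), σ k = -(B : ℝ) := by
      rw [hfilt, Finset.sum_congr rfl (fun k hk => (Finset.mem_filter.mp hk).2),
        Finset.sum_const, nsmul_eq_mul, mul_neg_one, hB]
    rw [e1, e2]; ring
  -- A + B = n
  have hABn : A + B = n := by
    have := Finset.card_filter_add_card_filter_not (s := (Finset.univ : Finset (Fin n)))
      (p := fun k => σ k = 1)
    rw [Finset.card_univ, Fintype.card_fin] at this
    have hfilt : Finset.univ.filter (fun k => ¬ σ k = 1)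
        = Finset.univ.filter (fun k => σ k = -1) := by
      apply Finset.filter_congr
      intro k _
      rcases hbinary k with h | h <;> norm_num [h]
    rw [hfilt] at this
    exact this
  -- key integer equation
  have key : ((A : ℤ) - B) ^ 2 = (A : ℤ) + B := by
    have : ((A : ℝ) - B) ^ 2 = ((A : ℝ) + B) := by
      rw [← hAB, hsqR, ← hABn]; push_cast; ring
    exact_mod_cast this
  rcases le_total B A with h | h
  · refine ⟨A - B, Or.inl ⟨?_, ?_⟩⟩
    · zify [h]; nlinarith [key]
    · rcases Nat.eq_or_lt_of_le h with he | hlt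
      · have heZ : (A : ℤ) = B := by exact_mod_cast he.symm
        have h0 : (A : ℤ) + B = 0 := by rw [← key, heZ]; ring
        have hA0 : A = 0 := by omega
        have hB0 : B = 0 := by omega
        simp [hA0, hB0]
      · have h1 : 1 ≤ A - B := by omega
        zify [h, h1]; nlinarith [key]
  · refine ⟨B - A, Or.inr ⟨?_, ?_⟩⟩
    · zify [h]; nlinarith [key]
    · rcases Nat.eq_or_lt_of_le h with he | hlt
      · have heZ : (A : ℤ) = B := by exact_mod_cast he
        have h0 : (A : ℤ) + B = 0 := by rw [← key, heZ]; ring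
        have hA0 : A = 0 := by omega
        have hB0 : B = 0 := by omega
        simp [hA0, hB0]
      · have h1 : 1 ≤ B - A := by omega
        zify [h, h1]; nlinarith [key]
end

section
/- There is no binary translating vortex crystal with $n = 4$ collinear vortices consisting of two positive and two negative vortices all distinct; that is, there are no four distinct real numbers $p_1, p_2, q_1, q_2$ and real $c \neq 0$ such that the configuration with $+1$ at $p_1, p_2$ and $-1$ at $q_1, q_2$ satisfies the translating balance equations $\frac{1}{p_j - p_{3-j}} - \frac{1}{p_j - q_1} - \frac{1}{p_j - q_2} = c$ for $j=1,2$ and $-\frac{1}{q_j - q_{3-j}} + \frac{1}{q_j - p_1} + \frac{1}{q_j - p_2} = c$ for $j=1,2$. -/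
private lemma aux_no_translating (p₁ p₂ q₁ q₂ c : ℝ) (hc : c ≠ 0)
    (h12 : p₁ ≠ p₂) (h1q1 : p₁ ≠ q₁) (h1q2 : p₁ ≠ q₂)
    (h2q1 : p₂ ≠ q₁) (h2q2 : p₂ ≠ q₂) (hq12 : q₁ ≠ q₂)
    (hs : p₁ + p₂ + q₁ + q₂ = 0)
    (h₁ : 1 / (p₁ - p₂) - 1 / (p₁ - q₁) - 1 / (p₁ - q₂) = c)
    (h₂ : 1 / (p₂ - p₁) - 1 / (p₂ - q₁) - 1 / (p₂ - q₂) = c)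
    (h₃ : -(1 / (q₁ - q₂)) + 1 / (q₁ - p₁) + 1 / (q₁ - p₂) = c)
    (h₄ : -(1 / (q₂ - q₁)) + 1 / (q₂ - p₁) + 1 / (q₂ - p₂) = c) : False := by
  have d12 : p₁ - p₂ ≠ 0 := sub_ne_zero.mpr h12
  have d21 : p₂ - p₁ ≠ 0 := sub_ne_zero.mpr (Ne.symm h12)
  have d1q1 : p₁ - q₁ ≠ 0 := sub_ne_zero.mpr h1q1
  have d1q2 : p₁ - q₂ ≠ 0 := sub_ne_zero.mpr h1q2
  have d2q1 : p₂ - q₁ ≠ 0 := sub_ne_zero.mpr h2q1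
  have d2q2 : p₂ - q₂ ≠ 0 := sub_ne_zero.mpr h2q2
  have dq1p1 : q₁ - p₁ ≠ 0 := sub_ne_zero.mpr (Ne.symm h1q1)
  have dq1p2 : q₁ - p₂ ≠ 0 := sub_ne_zero.mpr (Ne.symm h2q1)
  have dq2p1 : q₂ - p₁ ≠ 0 := sub_ne_zero.mpr (Ne.symm h1q2)
  have dq2p2 : q₂ - p₂ ≠ 0 := sub_ne_zero.mpr (Ne.symm h2q2)
  have dq12 : q₁ - q₂ ≠ 0 := sub_ne_zero.mpr hq12
  have dq21 : q₂ - q₁ ≠ 0 := sub_ne_zero.mpr (Ne.symm hq12)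
  -- cleared (polynomial) forms of the four balance equations
  have H₁ : (p₁-q₁)*(p₁-q₂) - (p₁-p₂)*(p₁-q₂) - (p₁-p₂)*(p₁-q₁)
      - c*((p₁-p₂)*((p₁-q₁)*(p₁-q₂))) = 0 := by
    field_simp at h₁; linear_combination h₁
  have H₂ : (p₂-q₁)*(p₂-q₂) - (p₂-p₁)*(p₂-q₂) - (p₂-p₁)*(p₂-q₁)
      - c*((p₂-p₁)*((p₂-q₁)*(p₂-q₂))) = 0 := by
    field_simp at h₂; linear_combination h₂
  have H₃ : -((q₁-p₁)*(q₁-p₂)) + (q₁-q₂)*(q₁-p₂) + (q₁-q₂)*(q₁-p₁)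
      - c*((q₁-q₂)*((q₁-p₁)*(q₁-p₂))) = 0 := by
    field_simp at h₃; linear_combination h₃
  have H₄ : -((q₂-p₁)*(q₂-p₂)) + (q₂-q₁)*(q₂-p₂) + (q₂-q₁)*(q₂-p₁)
      - c*((q₂-q₁)*((q₂-p₁)*(q₂-p₂))) = 0 := by
    field_simp at h₄; linear_combination h₄
  -- first key quadratic relation (after cancelling p₁ - p₂)
  have hA1E : (p₁-p₂) * (c*q₁^2 - p₂ + c*p₂*q₁ - c*p₂^2 - p₁ + c*p₁*q₁ - c*p₁*p₂ - c*p₁^2) = 0 := by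
    linear_combination (1/2)*H₁ - (1/2)*H₂
      + ((1/2)*p₂ - p₂*q₁*c + (1/2)*p₂^2*c - (1/2)*p₁ + p₁*q₁*c - (1/2)*p₁^2*c)*hs
  have hA1 : c*q₁^2 - p₂ + c*p₂*q₁ - c*p₂^2 - p₁ + c*p₁*q₁ - c*p₁*p₂ - c*p₁^2 = 0 :=
    (mul_eq_zero.mp hA1E).resolve_left d12
  -- second key quadratic relation (after cancelling q₁ - q₂)
  have hA2E : (q₁-q₂) * (q₂ - c*q₂^2 + q₁ - c*q₁*q₂ - c*q₁^2 + c*p₁*q₂ + c*p₁*q₁ + c*p₁^2) = 0 := by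
    linear_combination (1/2)*H₃ - (1/2)*H₄
      + (-(1/2)*q₂ + (1/2)*q₂^2*c + (1/2)*q₁ - (1/2)*q₁^2*c - p₁*q₂*c + p₁*q₁*c)*hs
  have hA2 : q₂ - c*q₂^2 + q₁ - c*q₁*q₂ - c*q₁^2 + c*p₁*q₂ + c*p₁*q₁ + c*p₁^2 = 0 :=
    (mul_eq_zero.mp hA2E).resolve_left dq12
  -- the two products of the pairs are equal
  have hfb : c*(q₁*q₂) = c*(p₁*p₂) := by
    linear_combination (-(1:ℝ)/2)*hA1 + (1/2)*hA2
      + (-(1/2) + (1/2)*q₂*c + q₁*c - (1/2)*p₂*c - p₁*c)*hs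
  have hb : q₁*q₂ = p₁*p₂ := mul_left_cancel₀ hc hfb
  -- cubic relation
  have hB2 : -4*c*(p₁+p₂)^3 + 16*c*(p₁+p₂)*(p₁*p₂) + 16*(p₁*p₂) = 0 := by
    linear_combination 2*H₁ + 2*H₂
      + (2*p₂ - 2*c*p₂^2 + 2*p₁ + 4*c*p₁*p₂ - 2*c*p₁^2)*hs + (-4)*hb
  -- (p₁+p₂)(c(p₁+p₂)+1) = 0
  have hKey : (p₁+p₂) * (c*(p₁+p₂)+1) = 0 := by
    linear_combination (-1)*hA1 + (-c)*hb + (q₁*c)*hs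
  rcases mul_eq_zero.mp hKey with hs0 | hcs
  · -- sum of the positive pair is zero; then p₁ = p₂ = 0
    have hb0 : p₁*p₂ = 0 := by
      linear_combination (1/16)*hB2 + (c*((1/4)*(p₁+p₂)^2 - p₁*p₂))*hs0
    have hp1 : p₁ = 0 := by
      have h2 : p₁^2 = 0 := by linear_combination (-1)*hb0 + p₁*hs0
      exact pow_eq_zero_iff (two_ne_zero) |>.mp h2
    have hp2 : p₂ = 0 := by linarith
    exact h12 (hp1.trans hp2.symm)
  · -- c(p₁+p₂) = -1; then (p₁+p₂)² = 0, contradiction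
    have hs2 : (p₁+p₂)^2 = 0 := by
      linear_combination (1/4)*hB2 + ((p₁+p₂)^2 - 4*(p₁*p₂))*hcs
    have hs0 : p₁ + p₂ = 0 := pow_eq_zero_iff (two_ne_zero) |>.mp hs2
    rw [hs0, mul_zero] at hcs
    norm_num at hcs

theorem no_collinear_translating_two_pairs (p₁ p₂ q₁ q₂ c : ℝ)
    (hc : c ≠ 0)
    (hdist : p₁ ≠ p₂ ∧ p₁ ≠ q₁ ∧ p₁ ≠ q₂ ∧ p₂ ≠ q₁ ∧ p₂ ≠ q₂ ∧ q₁ ≠ q₂)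
    (h₁ : 1 / (p₁ - p₂) - 1 / (p₁ - q₁) - 1 / (p₁ - q₂) = c)
    (h₂ : 1 / (p₂ - p₁) - 1 / (p₂ - q₁) - 1 / (p₂ - q₂) = c)
    (h₃ : -(1 / (q₁ - q₂)) + 1 / (q₁ - p₁) + 1 / (q₁ - p₂) = c)
    (h₄ : -(1 / (q₂ - q₁)) + 1 / (q₂ - p₁) + 1 / (q₂ - p₂) = c) : False := by
  obtain ⟨a, b, d, e, f, g⟩ := hdist
  set t : ℝ := (p₁ + p₂ + q₁ + q₂)/4 with ht
  refine aux_no_translating (p₁ - t) (p₂ - t) (q₁ - t) (q₂ - t) c hc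
    (fun h => a (by linarith)) (fun h => b (by linarith)) (fun h => d (by linarith))
    (fun h => e (by linarith)) (fun h => f (by linarith)) (fun h => g (by linarith))
    (by rw [ht]; ring) ?_ ?_ ?_ ?_
  · rw [show (p₁ - t) - (p₂ - t) = p₁ - p₂ from by ring,
        show (p₁ - t) - (q₁ - t) = p₁ - q₁ from by ring,
        show (p₁ - t) - (q₂ - t) = p₁ - q₂ from by ring]
    exact h₁
  · rw [show (p₂ - t) - (p₁ - t) = p₂ - p₁ from by ring,
        show (p₂ - t) - (q₁ - t) = p₂ - q₁ from by ring,
        show (p₂ - t) - (q₂ - t) = p₂ - q₂ from by ring]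
    exact h₂
  · rw [show (q₁ - t) - (q₂ - t) = q₁ - q₂ from by ring,
        show (q₁ - t) - (p₁ - t) = q₁ - p₁ from by ring,
        show (q₁ - t) - (p₂ - t) = q₁ - p₂ from by ring]
    exact h₃
  · rw [show (q₂ - t) - (q₁ - t) = q₂ - q₁ from by ring,
        show (q₂ - t) - (p₁ - t) = q₂ - p₁ from by ring,
        show (q₂ - t) - (p₂ - t) = q₂ - p₂ from by ring]
    exact h₄
end
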